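/- arXiv:2102.03445 — 9 statements merged into one kernel-verified Lean document; each statement's English description precedes it below -/
import Mathlib

section
/- The function K₁ = T₁² + T₂² + T₃² is a first integral of the Clebsch vector field X_s. -/
/-!
The `T`-component of the Clebsch field is the cross product `(j S) ⨯₃ T` (with `j S` the
componentwise product), which is orthogonal to `T`; so the derivative `2 T ⬝ᵥ X_s(T)` of
`K₁ = T ⬝ᵥ T` along `X_s` vanishes.
-/

/-- The Clebsch vector field `X_s` on ℝ⁶ = (Fin 3 → ℝ) × (Fin 3 → ℝ):
`X_s(S_α) = j_α (j_γ - j_β) T_β T_γ + (j_β - j_γ) S_β S_γ`,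
`X_s(T_α) = j_β S_β T_γ - j_γ S_γ T_β`, with `(α, β, γ) = (α, α+1, α+2)` cyclically. -/
noncomputable def Xs (j : Fin 3 → ℝ) (p : (Fin 3 → ℝ) × (Fin 3 → ℝ)) :
    (Fin 3 → ℝ) × (Fin 3 → ℝ) :=
  (fun α => j α * (j (α + 2) - j (α + 1)) * p.2 (α + 1) * p.2 (α + 2)
      + (j (α + 1) - j (α + 2)) * p.1 (α + 1) * p.1 (α + 2),
   fun α => j (α + 1) * p.1 (α + 1) * p.2 (α + 2)
      - j (α + 2) * p.1 (α + 2) * p.2 (α + 1))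

/-- `K₁ = T₁² + T₂² + T₃²`. -/
noncomputable def K1fun (p : (Fin 3 → ℝ) × (Fin 3 → ℝ)) : ℝ :=
  ∑ α : Fin 3, p.2 α ^ 2

open Matrix

lemma Xs_snd (j : Fin 3 → ℝ) (p : (Fin 3 → ℝ) × (Fin 3 → ℝ)) :
    (Xs j p).2 = (j * p.1) ⨯₃ p.2 := by
  ext α
  fin_cases α <;> simp [Xs, cross_apply]

lemma fderiv_sum_sq_apply {ι : Type*} [Fintype ι] (x v : ι → ℝ) :
    fderiv ℝ (fun y : ι → ℝ => ∑ i, y i ^ 2) x v = 2 * (x ⬝ᵥ v) := by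
  have hsq : HasFDerivAt (fun y : ι → ℝ => ∑ i, y i ^ 2)
      (∑ i, (2 * x i) • ContinuousLinearMap.proj i) x :=
    HasFDerivAt.fun_sum fun i _ => by
      simpa using (ContinuousLinearMap.proj (R := ℝ) (φ := fun _ : ι => ℝ) i).hasFDerivAt.pow 2
  rw [hsq.fderiv]
  simp [dotProduct, Finset.mul_sum, mul_assoc]

lemma fderiv_K1fun_apply (p v : (Fin 3 → ℝ) × (Fin 3 → ℝ)) :
    fderiv ℝ K1fun p v = 2 * (p.2 ⬝ᵥ v.2) := by
  have hK : K1fun = (fun y : Fin 3 → ℝ => ∑ i, y i ^ 2) ∘ Prod.snd := rfl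
  rw [hK, fderiv_comp _ (by fun_prop) differentiableAt_snd, fderiv_snd]
  exact fderiv_sum_sq_apply p.2 v.2

theorem K1_first_integral_of_Xs (j : Fin 3 → ℝ)
    (p : (Fin 3 → ℝ) × (Fin 3 → ℝ)) :
    fderiv ℝ K1fun p (Xs j p) = 0 := by
  rw [fderiv_K1fun_apply, Xs_snd, dot_cross_self, mul_zero]
end

section
/- The Hamiltonian H_p = Σ_α (S_α² + (j_β + j_γ)T_α²) is a first integral of the vector field X_s, i.e. the derivative of H_p along X_s vanishes identically. -/
/-- `H_p = Σ_α S_α² + (j_β + j_γ) T_α²`. -/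
noncomputable def Hp (j : Fin 3 → ℝ) (p : (Fin 3 → ℝ) × (Fin 3 → ℝ)) : ℝ :=
  ∑ α : Fin 3, (p.1 α ^ 2 + (j (α + 1) + j (α + 2)) * p.2 α ^ 2)

/-!
Differentiating the diagonal quadratic form `H_p` turns `dH_p(X_s)` into the weighted pairing
`Σ_α S_α X_s(S_α) + (j_β + j_γ) T_α X_s(T_α)`, a cubic polynomial in `(S, T)` which vanishes
identically.
-/

theorem fderiv_sum_sq_add_mul_sq_apply {ι : Type*} [Fintype ι] (c : ι → ℝ)
    (p v : (ι → ℝ) × (ι → ℝ)) :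
    fderiv ℝ (fun q : (ι → ℝ) × (ι → ℝ) => ∑ i, (q.1 i ^ 2 + c i * q.2 i ^ 2)) p v
      = 2 * ∑ i, (p.1 i * v.1 i + c i * p.2 i * v.2 i) := by
  have hS i : HasFDerivAt (fun q : (ι → ℝ) × (ι → ℝ) => q.1 i) _ p :=
    (hasFDerivAt_apply (𝕜 := ℝ) i p.1).comp p hasFDerivAt_fst
  have hT i : HasFDerivAt (fun q : (ι → ℝ) × (ι → ℝ) => q.2 i) _ p :=
    (hasFDerivAt_apply (𝕜 := ℝ) i p.2).comp p hasFDerivAt_snd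
  have hH : HasFDerivAt (fun q : (ι → ℝ) × (ι → ℝ) => ∑ i, (q.1 i ^ 2 + c i * q.2 i ^ 2)) _ p :=
    HasFDerivAt.fun_sum fun i _ => ((hS i).pow 2).add (((hT i).pow 2).const_mul (c i))
  rw [hH.fderiv, Finset.mul_sum]
  simp only [Nat.add_one_sub_one, pow_one, nsmul_eq_mul, Nat.cast_ofNat, sum_apply, add_apply,
    smul_apply, ContinuousLinearMap.comp_apply, ContinuousLinearMap.coe_fst',
    ContinuousLinearMap.coe_snd', ContinuousLinearMap.proj_apply, smul_eq_mul]
  exact Finset.sum_congr rfl fun i _ => by ring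

/-- The `S`-part is the cyclic sum of `(j_β - j_γ) S_α S_β S_γ`, and the coefficient of
`S_α T_β T_γ` is `j_α ((j_γ - j_β) - (j_γ + j_α) + (j_α + j_β)) = 0`. -/
theorem sum_mul_Xs_eq_zero (j : Fin 3 → ℝ) (p : (Fin 3 → ℝ) × (Fin 3 → ℝ)) :
    ∑ α, (p.1 α * (Xs j p).1 α + (j (α + 1) + j (α + 2)) * p.2 α * (Xs j p).2 α) = 0 := by
  simp only [Xs, Fin.sum_univ_three, Fin.reduceAdd]
  ring

theorem Hp_first_integral_of_Xs (j : Fin 3 → ℝ)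
    (p : (Fin 3 → ℝ) × (Fin 3 → ℝ)) :
    fderiv ℝ (Hp j) p (Xs j p) = 0 := by
  unfold Hp
  rw [fderiv_sum_sq_add_mul_sq_apply, sum_mul_Xs_eq_zero, mul_zero]
end

section
/- Let v₁, v₂, v₃ satisfy v₁² - v₂² = j₁ - j₂ and v₁² - v₃² = j₁ - j₃, and let c_α satisfy c₁² + c₂² + c₃² = 0 and Σ j_α c_α² = 0. Define A_α = c_α v_β v_γ and B_α = c_α v_α. Then the four quadratic relations hold: Σ_α ((j_β + j_γ)B_α² + A_α²) = 0, Σ_α (j_β j_γ B_α² + j_α A_α²) = 0, Σ_α A_α B_α = 0, and Σ_α B_α² = 0. -/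
theorem quadric_relations (j1 j2 j3 v1 v2 v3 c1 c2 c3 A1 A2 A3 B1 B2 B3 : ℂ)
    (hv12 : v1 ^ 2 - v2 ^ 2 = j1 - j2)
    (hv13 : v1 ^ 2 - v3 ^ 2 = j1 - j3)
    (hc : c1 ^ 2 + c2 ^ 2 + c3 ^ 2 = 0)
    (hjc : j1 * c1 ^ 2 + j2 * c2 ^ 2 + j3 * c3 ^ 2 = 0)
    (hA1 : A1 = c1 * v2 * v3) (hA2 : A2 = c2 * v3 * v1) (hA3 : A3 = c3 * v1 * v2)
    (hB1 : B1 = c1 * v1) (hB2 : B2 = c2 * v2) (hB3 : B3 = c3 * v3) :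
    ((j2 + j3) * B1 ^ 2 + A1 ^ 2) + ((j3 + j1) * B2 ^ 2 + A2 ^ 2)
      + ((j1 + j2) * B3 ^ 2 + A3 ^ 2) = 0 ∧
    (j2 * j3 * B1 ^ 2 + j1 * A1 ^ 2) + (j3 * j1 * B2 ^ 2 + j2 * A2 ^ 2)
      + (j1 * j2 * B3 ^ 2 + j3 * A3 ^ 2) = 0 ∧
    A1 * B1 + A2 * B2 + A3 * B3 = 0 ∧
    B1 ^ 2 + B2 ^ 2 + B3 ^ 2 = 0 := by
  subst hA1 hA2 hA3 hB1 hB2 hB3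
  refine ⟨?_, ?_, ?_, ?_⟩
  · linear_combination
      (-(c1^2*(v1^2-(j1-j3)) + (j1+j3)*c2^2 + c3^2*v1^2)) * hv12
      + (-(c1^2*v2^2 + c2^2*v1^2 + (j1+j2)*c3^2)) * hv13
      + (v1^4 + 2*(j2+j3)*v1^2 + (-j1^2 - j1*j2 - j1*j3 + j2*j3)) * hc
      + (-2*v1^2 + 2*j1) * hjc
  · linear_combination
      (-(j1*c1^2*(v1^2-(j1-j3)) + j1*j3*c2^2 + j3*c3^2*v1^2)) * hv12
      + (-(j1*c1^2*v2^2 + j2*c2^2*v1^2 + j1*j2*c3^2)) * hv13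
      + ((j1*j2+j1*j3+j2*j3)*v1^2 - j1*(j1*j2+j1*j3-j2*j3)) * hc
      + (v1^4 - 2*j1*v1^2 + j1^2) * hjc
  · linear_combination (v1*v2*v3) * hc
  · linear_combination (-c2^2) * hv12 + (-c3^2) * hv13 + (v1^2 - j1) * hc + hjc
end

section
/- Suppose v_α² = v + j_α for α = 1,2,3 and Σ_α A_α² ≠ 0, where A_α = c_α v_β v_γ with Σc_α² = 0 and Σ j_α c_α² = 0. Then v = -(Σ_α j_α A_α²)/(Σ_α A_α²). -/
theorem v_formula (v j1 j2 j3 v1 v2 v3 c1 c2 c3 A1 A2 A3 : ℂ)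
    (hv1 : v1 ^ 2 = v + j1) (hv2 : v2 ^ 2 = v + j2) (hv3 : v3 ^ 2 = v + j3)
    (hc : c1 ^ 2 + c2 ^ 2 + c3 ^ 2 = 0)
    (hjc : j1 * c1 ^ 2 + j2 * c2 ^ 2 + j3 * c3 ^ 2 = 0)
    (hA1 : A1 = c1 * v2 * v3) (hA2 : A2 = c2 * v3 * v1) (hA3 : A3 = c3 * v1 * v2)
    (hA : A1 ^ 2 + A2 ^ 2 + A3 ^ 2 ≠ 0) :
    v = -(j1 * A1 ^ 2 + j2 * A2 ^ 2 + j3 * A3 ^ 2) / (A1 ^ 2 + A2 ^ 2 + A3 ^ 2) := by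
  rw [eq_div_iff hA]
  subst hA1 hA2 hA3
  linear_combination (v + j1) * c1 ^ 2 * (v3 ^ 2 * hv2 + (v + j2) * hv3)
    + (v + j2) * c2 ^ 2 * (v1 ^ 2 * hv3 + (v + j3) * hv1)
    + (v + j3) * c3 ^ 2 * (v2 ^ 2 * hv1 + (v + j1) * hv2)
    + (v + j1) * (v + j2) * (v + j3) * hc
end

section
/- Let x₁ = v and consider the quadratic equation in x: Σ_α [((x+j_α)/(v+j_α))X_α + ((x+j_β)(x+j_γ))/((v+j_β)(v+j_γ))·Y_α] = 0, under the constraint Σ_α (X_α + Y_α) = 0. Then x = v is a root, and the second root x₂ equals (a·v + b)/(c·v + d) where a = Σ j_α X_α, b = -Σ(j_β j_γ X_α + j_α(j_β+j_γ)Y_α), c = Σ Y_α, d = Σ j_α Y_α (assuming the leading coefficient and cv+d are nonzero and all v+j_α ≠ 0). -/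
/-! At `x = v` the cleared quadratic is `(v+j₁)(v+j₂)(v+j₃) Σ_α (X_α + Y_α)`, which the constraint
kills; dividing out `x - v` leaves the linear factor `(cv+d)x - (av+b)`, whose root is the
Möbius image of `v`. The product of the roots is then read off from the constant term. -/

section ClearedQuadratic

variable {R : Type*} [CommRing R] (v j1 j2 j3 X1 X2 X3 Y1 Y2 Y3 : R)

def clearedQuadratic (x : R) : R :=
  ((x + j1) * (v + j2) * (v + j3) * X1
    + (x + j2) * (x + j3) * (v + j1) * Y1)
  + ((x + j2) * (v + j3) * (v + j1) * X2
    + (x + j3) * (x + j1) * (v + j2) * Y2)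
  + ((x + j3) * (v + j1) * (v + j2) * X3
    + (x + j1) * (x + j2) * (v + j3) * Y3)

variable {v j1 j2 j3 X1 X2 X3 Y1 Y2 Y3}

theorem clearedQuadratic_eq_sub_mul {a b c d : R}
    (hconstr : (X1 + Y1) + (X2 + Y2) + (X3 + Y3) = 0)
    (ha : a = j1 * X1 + j2 * X2 + j3 * X3)
    (hb : b = -((j2 * j3 * X1 + j1 * (j2 + j3) * Y1)
        + (j3 * j1 * X2 + j2 * (j3 + j1) * Y2)
        + (j1 * j2 * X3 + j3 * (j1 + j2) * Y3)))
    (hc : c = Y1 + Y2 + Y3)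
    (hd : d = j1 * Y1 + j2 * Y2 + j3 * Y3) (x : R) :
    clearedQuadratic v j1 j2 j3 X1 X2 X3 Y1 Y2 Y3 x
      = (x - v) * ((c * v + d) * x - (a * v + b)) := by
  subst ha hb hc hd
  unfold clearedQuadratic
  linear_combination
    ((v ^ 2 + v * (j1 + j2 + j3)) * x + v * (j1 * j2 + j2 * j3 + j3 * j1) + j1 * j2 * j3) * hconstr

end ClearedQuadratic

theorem quadratic_roots_of_eq_sub_mul {K : Type*} [Field K] {q : K → K} {v A C : K}
    (hq : ∀ x, q x = (x - v) * (C * x - A)) (hC : C ≠ 0) :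
    q v = 0 ∧ q (A / C) = 0 ∧ C * (v * (A / C)) = q 0 := by
  refine ⟨by rw [hq, sub_self, zero_mul], by rw [hq, mul_div_cancel₀ _ hC, sub_self, mul_zero], ?_⟩
  rw [hq]
  field_simp
  ring

theorem second_root_moebius_general (v j1 j2 j3 X1 X2 X3 Y1 Y2 Y3 a b c d : ℂ)
    (hconstr : (X1 + Y1) + (X2 + Y2) + (X3 + Y3) = 0)
    (ha : a = j1 * X1 + j2 * X2 + j3 * X3)
    (hb : b = -((j2 * j3 * X1 + j1 * (j2 + j3) * Y1)
        + (j3 * j1 * X2 + j2 * (j3 + j1) * Y2)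
        + (j1 * j2 * X3 + j3 * (j1 + j2) * Y3)))
    (hc : c = Y1 + Y2 + Y3)
    (hd : d = j1 * Y1 + j2 * Y2 + j3 * Y3)
    (Q : ℂ → ℂ)
    (hQ : Q = fun x =>
      ((x + j1) * (v + j2) * (v + j3) * X1
        + (x + j2) * (x + j3) * (v + j1) * Y1)
      + ((x + j2) * (v + j3) * (v + j1) * X2
        + (x + j3) * (x + j1) * (v + j2) * Y2)
      + ((x + j3) * (v + j1) * (v + j2) * X3
        + (x + j1) * (x + j2) * (v + j3) * Y3))
    (hcd : c * v + d ≠ 0) :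
    Q v = 0 ∧
    Q ((a * v + b) / (c * v + d)) = 0 ∧
    ((v + j1) * Y1 + (v + j2) * Y2 + (v + j3) * Y3)
        * (v * ((a * v + b) / (c * v + d))) = Q 0 := by
  have hlead : (v + j1) * Y1 + (v + j2) * Y2 + (v + j3) * Y3 = c * v + d := by
    rw [hc, hd]; ring
  rw [hlead]
  subst hQ
  exact quadratic_roots_of_eq_sub_mul (clearedQuadratic_eq_sub_mul hconstr ha hb hc hd) hcd

/-- The quadratic (in `x`) obtained from
`Σ_α ((x+j_α)/(v+j_α)) X_α + ((x+j_β)(x+j_γ))/((v+j_β)(v+j_γ)) Y_α = 0`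
by clearing denominators (multiplying by `(v+j₁)(v+j₂)(v+j₃)`):
`x = v` is a root, the Möbius image `x₂ = (av+b)/(cv+d)` is a root, and the
Viète product formula identifies `x₂` as the second root. -/
theorem second_root_moebius (v j1 j2 j3 X1 X2 X3 Y1 Y2 Y3 a b c d : ℂ)
    (h1 : v + j1 ≠ 0) (h2 : v + j2 ≠ 0) (h3 : v + j3 ≠ 0)
    (hconstr : (X1 + Y1) + (X2 + Y2) + (X3 + Y3) = 0)
    (ha : a = j1 * X1 + j2 * X2 + j3 * X3)
    (hb : b = -((j2 * j3 * X1 + j1 * (j2 + j3) * Y1)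
        + (j3 * j1 * X2 + j2 * (j3 + j1) * Y2)
        + (j1 * j2 * X3 + j3 * (j1 + j2) * Y3)))
    (hc : c = Y1 + Y2 + Y3)
    (hd : d = j1 * Y1 + j2 * Y2 + j3 * Y3)
    (Q : ℂ → ℂ)
    (hQ : Q = fun x =>
      ((x + j1) * (v + j2) * (v + j3) * X1
        + (x + j2) * (x + j3) * (v + j1) * Y1)
      + ((x + j2) * (v + j3) * (v + j1) * X2
        + (x + j3) * (x + j1) * (v + j2) * Y2)
      + ((x + j3) * (v + j1) * (v + j2) * X3
        + (x + j1) * (x + j2) * (v + j3) * Y3))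
    (hlead : (v + j1) * Y1 + (v + j2) * Y2 + (v + j3) * Y3 ≠ 0)
    (hcd : c * v + d ≠ 0) :
    Q v = 0 ∧
    Q ((a * v + b) / (c * v + d)) = 0 ∧
    ((v + j1) * Y1 + (v + j2) * Y2 + (v + j3) * Y3)
        * (v * ((a * v + b) / (c * v + d))) = Q 0 :=
  second_root_moebius_general v j1 j2 j3 X1 X2 X3 Y1 Y2 Y3 a b c d hconstr ha hb hc hd Q hQ hcd
end

section
/- With a = Σ j_α X_α, b = -Σ(j_β j_γ X_α + j_α(j_β + j_γ)Y_α), c = Σ Y_α, d = Σ j_α Y_α, and under the constraint Σ(X_α + Y_α) = 0, the determinant satisfies ad - bc = Σ_α (j_α - j_β)(j_α - j_γ) X_α Y_α. -/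
theorem moebius_determinant (j1 j2 j3 X1 X2 X3 Y1 Y2 Y3 a b c d : ℂ)
    (hconstr : X1 + X2 + X3 + Y1 + Y2 + Y3 = 0)
    (ha : a = j1 * X1 + j2 * X2 + j3 * X3)
    (hb : b = -((j2 * j3 * X1 + j1 * (j2 + j3) * Y1)
        + (j3 * j1 * X2 + j2 * (j3 + j1) * Y2)
        + (j1 * j2 * X3 + j3 * (j1 + j2) * Y3)))
    (hc : c = Y1 + Y2 + Y3)
    (hd : d = j1 * Y1 + j2 * Y2 + j3 * Y3) :
    a * d - b * c = (j1 - j2) * (j1 - j3) * X1 * Y1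
      + (j2 - j3) * (j2 - j1) * X2 * Y2
      + (j3 - j1) * (j3 - j2) * X3 * Y3 := by
  have h : X1 = -(X2 + X3 + Y1 + Y2 + Y3) := by linear_combination hconstr
  subst ha hb hc hd h
  ring
end

section
/- Under the constraint Σ_α(X_α + Y_α) = 0, the expression U = Σ_α (j_β - j_γ)(v_γ² X_β Y_γ - v_β² X_γ Y_β - (j_β - j_γ)Y_β Y_γ), with v_α² = x₁ + j_α, factorizes as U = L·M, where L = Σ_α (x₁ + j_α)Y_α and M = Σ_α j_α(X_α + Y_α). -/
theorem U_factorizes (x1 j1 j2 j3 X1 X2 X3 Y1 Y2 Y3 U L M : ℂ)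
    (hconstr : (X1 + Y1) + (X2 + Y2) + (X3 + Y3) = 0)
    (hU : U = ((j2 - j3) * ((x1 + j3) * X2 * Y3 - (x1 + j2) * X3 * Y2
          - (j2 - j3) * Y2 * Y3))
      + ((j3 - j1) * ((x1 + j1) * X3 * Y1 - (x1 + j3) * X1 * Y3
          - (j3 - j1) * Y3 * Y1))
      + ((j1 - j2) * ((x1 + j2) * X1 * Y2 - (x1 + j1) * X2 * Y1
          - (j1 - j2) * Y1 * Y2)))
    (hL : L = (x1 + j1) * Y1 + (x1 + j2) * Y2 + (x1 + j3) * Y3)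
    (hM : M = j1 * (X1 + Y1) + j2 * (X2 + Y2) + j3 * (X3 + Y3)) :
    U = L * M := by
  have h3 : X3 = -(X1 + Y1 + X2 + Y2 + Y3) := by linear_combination hconstr
  subst hU hL hM h3
  ring
end

section
/- Define the inverse-transformation formulas d_α X_α = ((x₁+j_α)(x₁+x₂+j_β+j_γ)/(x₁-x₂))(L-M+N) + (x₁+j_α)N + X and d_α Y_α = ((x₁+j_β)(x₁+j_γ)/(x₁-x₂))(L-M+N) + (x₂+j_α)L + X, with d_α = (j_α-j_β)(j_α-j_γ). Then Σ_α(X_α + Y_α) = 0, Σ_α(x₁+j_α)Y_α = L, Σ_α j_α(X_α+Y_α) = M, and Σ_α(x₂+j_α)X_α = N. -/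
set_option maxHeartbeats 2000000


theorem inverse_transformation (x1 x2 L M N X j1 j2 j3 : ℂ)
    (d1 d2 d3 X1 X2 X3 Y1 Y2 Y3 : ℂ)
    (hx : x1 ≠ x2)
    (h12 : j1 ≠ j2) (h13 : j1 ≠ j3) (h23 : j2 ≠ j3)
    (hd1 : d1 = (j1 - j2) * (j1 - j3))
    (hd2 : d2 = (j2 - j3) * (j2 - j1))
    (hd3 : d3 = (j3 - j1) * (j3 - j2))
    (hX1 : d1 * X1 = (x1 + j1) * (x1 + x2 + j2 + j3) / (x1 - x2) * (L - M + N)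
        + (x1 + j1) * N + X)
    (hX2 : d2 * X2 = (x1 + j2) * (x1 + x2 + j3 + j1) / (x1 - x2) * (L - M + N)
        + (x1 + j2) * N + X)
    (hX3 : d3 * X3 = (x1 + j3) * (x1 + x2 + j1 + j2) / (x1 - x2) * (L - M + N)
        + (x1 + j3) * N + X)
    (hY1 : d1 * Y1 = (x1 + j2) * (x1 + j3) / (x1 - x2) * (L - M + N)
        + (x2 + j1) * L + X)
    (hY2 : d2 * Y2 = (x1 + j3) * (x1 + j1) / (x1 - x2) * (L - M + N)
        + (x2 + j2) * L + X)
    (hY3 : d3 * Y3 = (x1 + j1) * (x1 + j2) / (x1 - x2) * (L - M + N)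
        + (x2 + j3) * L + X) :
    (X1 + Y1) + (X2 + Y2) + (X3 + Y3) = 0 ∧
    (x1 + j1) * Y1 + (x1 + j2) * Y2 + (x1 + j3) * Y3 = L ∧
    j1 * (X1 + Y1) + j2 * (X2 + Y2) + j3 * (X3 + Y3) = M ∧
    (x2 + j1) * X1 + (x2 + j2) * X2 + (x2 + j3) * X3 = N := by
  have hx' : x1 - x2 ≠ 0 := sub_ne_zero.mpr hx
  have hd1' : d1 ≠ 0 := by rw [hd1]; exact mul_ne_zero (sub_ne_zero.mpr h12) (sub_ne_zero.mpr h13)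
  have hd2' : d2 ≠ 0 := by rw [hd2]; exact mul_ne_zero (sub_ne_zero.mpr h23) (sub_ne_zero.mpr h12.symm)
  have hd3' : d3 ≠ 0 := by rw [hd3]; exact mul_ne_zero (sub_ne_zero.mpr h13.symm) (sub_ne_zero.mpr h23.symm)
  have eX1 : X1 = ((x1 + j1) * (x1 + x2 + j2 + j3) / (x1 - x2) * (L - M + N) + (x1 + j1) * N + X) / d1 := by
    field_simp at hX1 ⊢; linear_combination hX1
  have eX2 : X2 = ((x1 + j2) * (x1 + x2 + j3 + j1) / (x1 - x2) * (L - M + N) + (x1 + j2) * N + X) / d2 := by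
    field_simp at hX2 ⊢; linear_combination hX2
  have eX3 : X3 = ((x1 + j3) * (x1 + x2 + j1 + j2) / (x1 - x2) * (L - M + N) + (x1 + j3) * N + X) / d3 := by
    field_simp at hX3 ⊢; linear_combination hX3
  have eY1 : Y1 = ((x1 + j2) * (x1 + j3) / (x1 - x2) * (L - M + N) + (x2 + j1) * L + X) / d1 := by
    field_simp at hY1 ⊢; linear_combination hY1
  have eY2 : Y2 = ((x1 + j3) * (x1 + j1) / (x1 - x2) * (L - M + N) + (x2 + j2) * L + X) / d2 := by
    field_simp at hY2 ⊢; linear_combination hY2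
  have eY3 : Y3 = ((x1 + j1) * (x1 + j2) / (x1 - x2) * (L - M + N) + (x2 + j3) * L + X) / d3 := by
    field_simp at hY3 ⊢; linear_combination hY3
  subst eX1 eX2 eX3 eY1 eY2 eY3 hd1 hd2 hd3
  refine ⟨?_, ?_, ?_, ?_⟩ <;> (field_simp; ring)
end

section
/- With X_α, Y_α defined by the reconstruction formulas of the previous context, the Casimir identity √Φ(x₁)·Ĉ₁ = L·N holds, i.e. Σ_α d_α X_α Y_α · (x₁-x₂)² computed from the formulas, combined with v₁v₂v₃ = √Φ(x₁), yields (1/(v₁v₂v₃))Σ_α d_α X_α Y_α = LN/Φ(x₁)·(v₁v₂v₃); equivalently, Σ_α d_α X_α Y_α = L·N·(v₁v₂v₃)²/Φ(x₁) = L·N when (v₁v₂v₃)² = Φ(x₁). -/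
set_option maxHeartbeats 2000000


theorem casimir_factorization (x1 x2 L M N X j1 j2 j3 : ℂ)
    (d1 d2 d3 X1 X2 X3 Y1 Y2 Y3 : ℂ)
    (hx : x1 ≠ x2)
    (h12 : j1 ≠ j2) (h13 : j1 ≠ j3) (h23 : j2 ≠ j3)
    (hd1 : d1 = (j1 - j2) * (j1 - j3))
    (hd2 : d2 = (j2 - j3) * (j2 - j1))
    (hd3 : d3 = (j3 - j1) * (j3 - j2))
    (hX1 : d1 * X1 = (x1 + j1) * (x1 + x2 + j2 + j3) / (x1 - x2) * (L - M + N)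
        + (x1 + j1) * N + X)
    (hX2 : d2 * X2 = (x1 + j2) * (x1 + x2 + j3 + j1) / (x1 - x2) * (L - M + N)
        + (x1 + j2) * N + X)
    (hX3 : d3 * X3 = (x1 + j3) * (x1 + x2 + j1 + j2) / (x1 - x2) * (L - M + N)
        + (x1 + j3) * N + X)
    (hY1 : d1 * Y1 = (x1 + j2) * (x1 + j3) / (x1 - x2) * (L - M + N)
        + (x2 + j1) * L + X)
    (hY2 : d2 * Y2 = (x1 + j3) * (x1 + j1) / (x1 - x2) * (L - M + N)
        + (x2 + j2) * L + X)
    (hY3 : d3 * Y3 = (x1 + j1) * (x1 + j2) / (x1 - x2) * (L - M + N)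
        + (x2 + j3) * L + X) :
    d1 * X1 * Y1 + d2 * X2 * Y2 + d3 * X3 * Y3 = L * N   := by
  have hxs : x1 - x2 ≠ 0 := sub_ne_zero.mpr hx
  have hd1' : d1 ≠ 0 := by rw [hd1]; exact mul_ne_zero (sub_ne_zero.mpr h12) (sub_ne_zero.mpr h13)
  have hd2' : d2 ≠ 0 := by rw [hd2]; exact mul_ne_zero (sub_ne_zero.mpr h23) (sub_ne_zero.mpr h12.symm)
  have hd3' : d3 ≠ 0 := by rw [hd3]; exact mul_ne_zero (sub_ne_zero.mpr h13.symm) (sub_ne_zero.mpr h23.symm)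
  set t := (L - M + N) / (x1 - x2) with htdef
  have ht : L - M + N = (x1 - x2) * t := by rw [htdef]; field_simp
  have hX1' : d1 * X1 = (x1 + j1) * (x1 + x2 + j2 + j3) * t + (x1 + j1) * N + X := by
    rw [hX1, ht]; field_simp
  have hX2' : d2 * X2 = (x1 + j2) * (x1 + x2 + j3 + j1) * t + (x1 + j2) * N + X := by
    rw [hX2, ht]; field_simp
  have hX3' : d3 * X3 = (x1 + j3) * (x1 + x2 + j1 + j2) * t + (x1 + j3) * N + X := by
    rw [hX3, ht]; field_simp
  have hY1' : d1 * Y1 = (x1 + j2) * (x1 + j3) * t + (x2 + j1) * L + X := by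
    rw [hY1, ht]; field_simp
  have hY2' : d2 * Y2 = (x1 + j3) * (x1 + j1) * t + (x2 + j2) * L + X := by
    rw [hY2, ht]; field_simp
  have hY3' : d3 * Y3 = (x1 + j1) * (x1 + j2) * t + (x2 + j3) * L + X := by
    rw [hY3, ht]; field_simp
  have hM : M = L + N - (x1 - x2) * t := by linear_combination -ht
  have e1 : d1 * X1 * Y1 = (d1 * X1) * (d1 * Y1) / d1 := by field_simp
  have e2 : d2 * X2 * Y2 = (d2 * X2) * (d2 * Y2) / d2 := by field_simp
  have e3 : d3 * X3 * Y3 = (d3 * X3) * (d3 * Y3) / d3 := by field_simp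
  have n12 : j1 - j2 ≠ 0 := sub_ne_zero.mpr h12
  have n13 : j1 - j3 ≠ 0 := sub_ne_zero.mpr h13
  have n23 : j2 - j3 ≠ 0 := sub_ne_zero.mpr h23
  have n21 : j2 - j1 ≠ 0 := sub_ne_zero.mpr h12.symm
  have n31 : j3 - j1 ≠ 0 := sub_ne_zero.mpr h13.symm
  have n32 : j3 - j2 ≠ 0 := sub_ne_zero.mpr h23.symm
  rw [e1, e2, e3, hX1', hX2', hX3', hY1', hY2', hY3', hd1, hd2, hd3]
  field_simp
  ring
end
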